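/- arXiv:2407.12253 — 2 statements merged into one kernel-verified Lean document; each statement's English description precedes it below -/
import Mathlib

section
/- Let A₁, …, A_h be sets of integers each containing 0, with σ(A_i) = α_i for i = 1, …, h. Then 1 − σ(A₁ + ⋯ + A_h) ≤ Π_{i=1}^{h} (1 − α_i). -/
/-- The counting function of a set of integers: `countZ A x` is the number of
elements `a ∈ A` with `1 ≤ a ≤ x`. -/
noncomputable def countZ (A : Set ℤ) (x : ℕ) : ℕ := (A ∩ Set.Icc 1 (x : ℤ)).ncard

/-- The Shnirel'man density of a set of integers: `σ(A) = inf_{n ≥ 1} A(n)/n`. -/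
noncomputable def shnirelmannZ (A : Set ℤ) : ℝ :=
  ⨅ n : ℕ+, (countZ A n : ℝ) / ((n : ℕ) : ℝ)

/-- The sumset `A₁ + ⋯ + A_h` of a family of sets of integers: all integers
of the form `a₁ + ⋯ + a_h` with `aᵢ ∈ Aᵢ ∪ {0}` for all `i`. -/
def famSumZ {h : ℕ} (A : Fin h → Set ℤ) : Set ℤ :=
  {x | ∃ f : Fin h → ℤ, (∀ i, f i ∈ A i ∪ {0}) ∧ x = ∑ i, f i}

open Finset Classical in
lemma countZ_eq (A : Set ℤ) (n : ℕ) :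
    countZ A n = ((Finset.Icc (1:ℤ) (n:ℤ)).filter (· ∈ A)).card := by
  rw [countZ, show A ∩ Set.Icc 1 (n:ℤ) = ((Finset.Icc (1:ℤ) (n:ℤ)).filter (· ∈ A) : Finset ℤ) by
    ext x; simp only [Finset.coe_filter, Finset.mem_Icc, Set.mem_inter_iff, Set.mem_Icc, Set.mem_setOf_eq]; tauto, Set.ncard_coe_finset]

lemma countZ_le (A : Set ℤ) (n : ℕ) : countZ A n ≤ n := by
  classical
  rw [countZ_eq]
  calc ((Finset.Icc (1:ℤ) (n:ℤ)).filter (· ∈ A)).card ≤ (Finset.Icc (1:ℤ) (n:ℤ)).card :=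
        Finset.card_filter_le _ _
    _ = n := by rw [Int.card_Icc]; simp

lemma bddBelow_countZ (A : Set ℤ) :
    BddBelow (Set.range fun n : ℕ+ => (countZ A n : ℝ) / ((n : ℕ) : ℝ)) := by
  refine ⟨0, fun x hx => ?_⟩
  obtain ⟨n, rfl⟩ := hx
  positivity

lemma shnirelmannZ_nonneg (A : Set ℤ) : 0 ≤ shnirelmannZ A :=
  le_ciInf fun n => by positivity

lemma shnirelmannZ_le (A : Set ℤ) (n : ℕ+) :
    shnirelmannZ A ≤ (countZ A n : ℝ) / ((n : ℕ) : ℝ) :=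
  ciInf_le (bddBelow_countZ A) n

lemma shnirelmannZ_le_one (A : Set ℤ) : shnirelmannZ A ≤ 1 := by
  have := shnirelmannZ_le A 1
  have h1 : (countZ A 1 : ℝ) ≤ 1 := by exact_mod_cast countZ_le A 1
  simpa using this.trans (by simpa using h1)

lemma shnirelmannZ_mul_le (A : Set ℤ) (m : ℕ) :
    shnirelmannZ A * m ≤ countZ A m := by
  rcases Nat.eq_zero_or_pos m with rfl | hm
  · simp [countZ]
  · have := shnirelmannZ_le A ⟨m, hm⟩
    have hm' : (0:ℝ) < m := by exact_mod_cast hm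
    calc shnirelmannZ A * m ≤ ((countZ A m : ℝ) / m) * m := by
          apply mul_le_mul_of_nonneg_right _ hm'.le
          simpa using this
      _ = countZ A m := by field_simp

open Finset in
lemma key_count (A B : Set ℤ) (hA : (0:ℤ) ∈ A) (hB : (0:ℤ) ∈ B) (n : ℕ) :
    (countZ A n : ℝ) + shnirelmannZ B * ((n : ℝ) - countZ A n)
      ≤ countZ {x | ∃ a ∈ A, ∃ b ∈ B, x = a + b} n := by
  classical
  set β := shnirelmannZ B with hβ
  have hβ0 : 0 ≤ β := shnirelmannZ_nonneg B
  set N : ℤ := (n : ℤ) with hNdef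
  have hN : 0 ≤ N := Int.natCast_nonneg n
  set S : Set ℤ := {x | ∃ a ∈ A, ∃ b ∈ B, x = a + b} with hS
  have h0S : (0:ℤ) ∈ S := ⟨0, hA, 0, hB, by ring⟩
  have hSmem : ∀ a ∈ A, ∀ b ∈ B, a + b ∈ S := fun a ha b hb => ⟨a, ha, b, hb, rfl⟩
  set T : Finset ℤ := (Icc 0 N).filter (· ∈ A) with hT
  have h0T : (0:ℤ) ∈ T := by simp [hT, hA, hN]
  set d : ℤ → ℤ := fun a =>
    if h : ((Ioc a N).filter (· ∈ A)).Nonempty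
    then ((Ioc a N).filter (· ∈ A)).min' h - a - 1 else N - a with hdd
  have hd_bnd : ∀ a ∈ T, 0 ≤ d a ∧ a + d a ≤ N := by
    intro a ha
    rw [hT, mem_filter, mem_Icc] at ha
    simp only [hdd]
    split_ifs with h
    · have hm := Finset.min'_mem _ h
      rw [mem_filter, mem_Ioc] at hm
      omega
    · omega
  have hd_noA : ∀ a, ∀ x ∈ A, a < x → x ≤ a + d a → False := by
    intro a x hxA hax hxle
    simp only [hdd] at hxle
    split_ifs at hxle with h
    · have hm := Finset.min'_mem _ h
      rw [mem_filter, mem_Ioc] at hm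
      have hmin : ((Ioc a N).filter (· ∈ A)).min' h ≤ x :=
        Finset.min'_le _ x (by rw [mem_filter, mem_Ioc]; exact ⟨⟨hax, by omega⟩, hxA⟩)
      omega
    · exact h ⟨x, by rw [mem_filter, mem_Ioc]; exact ⟨⟨hax, by omega⟩, hxA⟩⟩
  have hcover : ∀ x : ℤ, 1 ≤ x → x ≤ N → x ∉ A → ∃ a ∈ T, a < x ∧ x ≤ a + d a := by
    intro x hx1 hxN hxA
    have hne : (T.filter (· < x)).Nonempty := ⟨0, mem_filter.2 ⟨h0T, by omega⟩⟩
    set a := (T.filter (· < x)).max' hne with hadef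
    have haT : a ∈ T ∧ a < x := by
      have := Finset.max'_mem _ hne; rw [mem_filter] at this; exact this
    refine ⟨a, haT.1, haT.2, ?_⟩
    by_contra hlt
    push_neg at hlt
    simp only [hdd] at hlt
    split_ifs at hlt with hex
    · set m := ((Ioc a N).filter (· ∈ A)).min' hex with hm
      have hmm := Finset.min'_mem _ hex
      rw [← hm, mem_filter, mem_Ioc] at hmm
      have hmx : m < x := by
        rcases lt_or_eq_of_le (show m ≤ x by omega) with h' | h'
        · exact h'
        · exact absurd (h' ▸ hmm.2) hxA
      have hmT : m ∈ T.filter (· < x) := by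
        rw [mem_filter, hT, mem_filter, mem_Icc]
        have h0a : 0 ≤ a := by
          have := haT.1; rw [hT, mem_filter, mem_Icc] at this; omega
        exact ⟨⟨⟨by omega, hmm.1.2⟩, hmm.2⟩, hmx⟩
      have := Finset.le_max' _ m hmT
      rw [← hadef] at this
      omega
    · omega
  -- lower bound on sum of gaps
  have hAn_le : countZ A n ≤ n := countZ_le A n
  have hsum_d : n - countZ A n ≤ ∑ a ∈ T, (d a).toNat := by
    have hsub : (Icc 1 N).filter (· ∉ A) ⊆ T.biUnion (fun a => Ioc a (a + d a)) := by
      intro x hx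
      rw [mem_filter, mem_Icc] at hx
      obtain ⟨a, haT, hax, hxle⟩ := hcover x hx.1.1 hx.1.2 hx.2
      exact mem_biUnion.2 ⟨a, haT, mem_Ioc.2 ⟨hax, hxle⟩⟩
    have h1 : ((Icc 1 N).filter (· ∉ A)).card = n - countZ A n := by
      have h2 := Finset.card_filter_add_card_filter_not (s := Icc 1 N) (p := (· ∈ A))
      rw [Int.card_Icc, hNdef] at h2
      rw [countZ_eq, hNdef]
      omega
    calc n - countZ A n = ((Icc 1 N).filter (· ∉ A)).card := h1.symm
      _ ≤ (T.biUnion (fun a => Ioc a (a + d a))).card := Finset.card_le_card hsub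
      _ ≤ ∑ a ∈ T, (Ioc a (a + d a)).card := Finset.card_biUnion_le
      _ = ∑ a ∈ T, (d a).toNat := by
          refine Finset.sum_congr rfl fun a _ => ?_
          rw [Int.card_Ioc]; congr 1; ring
  -- the disjoint family
  set G : ℤ → Finset ℤ := fun a => ((Icc (1:ℤ) (d a)).filter (· ∈ B)).image (a + ·) with hG
  have hGmem : ∀ a, ∀ x ∈ G a, a < x ∧ x ≤ a + d a ∧ (∃ b ∈ B, x = a + b) := by
    intro a x hx
    simp only [hG, mem_image, mem_filter, mem_Icc] at hx
    obtain ⟨b, ⟨⟨hb1, hbd⟩, hbB⟩, rfl⟩ := hx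
    exact ⟨by omega, by omega, b, hbB, rfl⟩
  have hGcard : ∀ a ∈ T, (G a).card = countZ B (d a).toNat := by
    intro a ha
    have h0d : 0 ≤ d a := (hd_bnd a ha).1
    rw [hG]
    simp only
    rw [Finset.card_image_of_injective _ (add_right_injective a), countZ_eq,
      Int.toNat_of_nonneg h0d]
  set F : ℤ → Finset ℤ := fun a => insert a (G a) with hF
  have haA : ∀ a ∈ T, a ∈ A := fun a ha => by
    rw [hT, mem_filter] at ha; exact ha.2
  have hFsub : ∀ a ∈ T, F a ⊆ (Icc 0 N).filter (· ∈ S) := by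
    intro a ha x hx
    have haIcc : 0 ≤ a ∧ a ≤ N := by
      rw [hT, mem_filter, mem_Icc] at ha; exact ⟨ha.1.1, ha.1.2⟩
    rw [hF] at hx
    simp only [mem_insert] at hx
    rw [mem_filter, mem_Icc]
    rcases hx with rfl | hx
    · exact ⟨⟨haIcc.1, haIcc.2⟩, by simpa using hSmem x (haA x ha) 0 hB⟩
    · obtain ⟨hax, hxle, b, hbB, rfl⟩ := hGmem a x hx
      have := (hd_bnd a ha).2
      exact ⟨⟨by omega, by omega⟩, hSmem a (haA a ha) b hbB⟩
  have hGnotA : ∀ a, ∀ x ∈ G a, x ∉ A := by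
    intro a x hx hxA
    obtain ⟨hax, hxle, _⟩ := hGmem a x hx
    exact hd_noA a x hxA hax hxle
  have hdisj : ∀ a ∈ T, ∀ a' ∈ T, a ≠ a' → Disjoint (F a) (F a') := by
    have key : ∀ a ∈ T, ∀ a' ∈ T, a < a' → ∀ x, x ∈ F a → x ∈ F a' → False := by
      intro a ha a' ha' hlt x hx hx'
      rw [hF] at hx hx'
      simp only [mem_insert] at hx hx'
      rcases hx with rfl | hx
      · rcases hx' with rfl | hx'
        · omega
        · obtain ⟨h1, _, _⟩ := hGmem a' x hx'
          omega
      · rcases hx' with rfl | hx'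
        · exact hGnotA a x hx (haA x ha')
        · obtain ⟨hax, hxle, _⟩ := hGmem a x hx
          obtain ⟨hax', hxle', _⟩ := hGmem a' x hx'
          exact hd_noA a a' (haA a' ha') hlt (by omega)
    intro a ha a' ha' hne
    rcases lt_trichotomy a a' with h' | h' | h'
    · exact Finset.disjoint_left.2 fun x hx hx' => key a ha a' ha' h' x hx hx'
    · exact absurd h' hne
    · exact Finset.disjoint_left.2 fun x hx hx' => key a' ha' a ha h' x hx' hx
  have hFcard : ∀ a ∈ T, (F a).card = 1 + countZ B (d a).toNat := by
    intro a ha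
    rw [hF]
    simp only
    rw [Finset.card_insert_of_notMem, hGcard a ha, add_comm]
    intro hmem
    exact absurd ((hGmem a a hmem).1) (lt_irrefl a)
  have hScard : ((Icc 0 N).filter (· ∈ S)).card = 1 + countZ S n := by
    have hicc : Icc (0:ℤ) N = insert 0 (Icc 1 N) := by
      ext x; simp only [mem_Icc, mem_insert]; omega
    rw [hicc, Finset.filter_insert, if_pos h0S,
      Finset.card_insert_of_notMem (by simp), countZ_eq, hNdef]
    omega
  have hTcard : T.card = 1 + countZ A n := by
    have hicc : Icc (0:ℤ) N = insert 0 (Icc 1 N) := by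
      ext x; simp only [mem_Icc, mem_insert]; omega
    rw [hT, hicc, Finset.filter_insert, if_pos hA,
      Finset.card_insert_of_notMem (by simp), countZ_eq, hNdef]
    omega
  -- the main natural-number inequality
  have hmain : countZ A n + ∑ a ∈ T, countZ B (d a).toNat ≤ countZ S n := by
    have h1 : ∑ a ∈ T, (F a).card ≤ ((Icc 0 N).filter (· ∈ S)).card := by
      rw [← Finset.card_biUnion hdisj]
      exact Finset.card_le_card (Finset.biUnion_subset.2 hFsub)
    rw [Finset.sum_congr rfl hFcard, Finset.sum_add_distrib, Finset.sum_const,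
      smul_eq_mul, mul_one, hTcard, hScard] at h1
    omega
  -- pass to the reals
  have hstep : (countZ A n : ℝ) + β * ((n:ℝ) - countZ A n)
      ≤ (countZ A n : ℝ) + ∑ a ∈ T, (countZ B (d a).toNat : ℝ) := by
    have h2 : β * ((n:ℝ) - countZ A n) ≤ ∑ a ∈ T, (countZ B (d a).toNat : ℝ) := by
      calc β * ((n:ℝ) - countZ A n) ≤ β * ((∑ a ∈ T, (d a).toNat : ℕ) : ℝ) := by
            apply mul_le_mul_of_nonneg_left _ hβ0
            have : ((n - countZ A n : ℕ) : ℝ) ≤ ((∑ a ∈ T, (d a).toNat : ℕ) : ℝ) := by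
              exact_mod_cast hsum_d
            rw [Nat.cast_sub hAn_le] at this
            exact this
        _ = ∑ a ∈ T, β * ((d a).toNat : ℝ) := by
            rw [Nat.cast_sum, Finset.mul_sum]
        _ ≤ ∑ a ∈ T, (countZ B (d a).toNat : ℝ) :=
            Finset.sum_le_sum fun a _ => shnirelmannZ_mul_le B (d a).toNat
    linarith
  have hfin : (countZ A n : ℝ) + ∑ a ∈ T, (countZ B (d a).toNat : ℝ) ≤ countZ S n := by
    rw [← Nat.cast_sum, ← Nat.cast_add]
    exact_mod_cast hmain
  exact hstep.trans hfin

lemma two_set_density (A B : Set ℤ) (hA : (0:ℤ) ∈ A) (hB : (0:ℤ) ∈ B) :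
    1 - shnirelmannZ {x | ∃ a ∈ A, ∃ b ∈ B, x = a + b}
      ≤ (1 - shnirelmannZ A) * (1 - shnirelmannZ B) := by
  set α := shnirelmannZ A with hα
  set β := shnirelmannZ B with hβ
  have hβ0 : 0 ≤ β := shnirelmannZ_nonneg B
  have hβ1 : β ≤ 1 := shnirelmannZ_le_one B
  have hσ : α + β - α * β ≤ shnirelmannZ {x | ∃ a ∈ A, ∃ b ∈ B, x = a + b} := by
    apply le_ciInf
    intro n
    have hn : (0:ℝ) < ((n : ℕ) : ℝ) := by exact_mod_cast n.2
    have hk := key_count A B hA hB n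
    have h1 : α * n ≤ countZ A n := shnirelmannZ_mul_le A n
    rw [le_div_iff₀ hn]
    nlinarith [mul_nonneg (sub_nonneg.2 hβ1) (sub_nonneg.2 h1)]
  nlinarith [hσ]

lemma famSumZ_zero_mem {h : ℕ} (A : Fin h → Set ℤ) : (0:ℤ) ∈ famSumZ A :=
  ⟨0, fun i => Or.inr rfl, by simp⟩

lemma famSumZ_succ {h : ℕ} (A : Fin (h+1) → Set ℤ) (h0 : ∀ i, (0:ℤ) ∈ A i) :
    famSumZ A = {x | ∃ a ∈ A 0, ∃ b ∈ famSumZ (fun i : Fin h => A i.succ), x = a + b} := by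
  ext x
  constructor
  · rintro ⟨f, hf, rfl⟩
    have ha : f 0 ∈ A 0 := by
      rcases hf 0 with h' | h'
      · exact h'
      · rw [Set.mem_singleton_iff] at h'; rw [h']; exact h0 0
    exact ⟨f 0, ha, ∑ i : Fin h, f i.succ, ⟨fun i => f i.succ, fun i => hf i.succ, rfl⟩,
      Fin.sum_univ_succ f⟩
  · rintro ⟨a, ha, b, ⟨g, hg, rfl⟩, rfl⟩
    refine ⟨Fin.cons a g, ?_, ?_⟩
    · intro i
      refine Fin.cases ?_ ?_ i
      · rw [Fin.cons_zero]; exact Or.inl ha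
      · intro j; rw [Fin.cons_succ]; exact hg j
    · rw [Fin.sum_univ_succ, Fin.cons_zero]
      simp only [Fin.cons_succ]

lemma aux_main (h : ℕ) (A : Fin h → Set ℤ) (h0 : ∀ i, (0:ℤ) ∈ A i) :
    1 - shnirelmannZ (famSumZ A) ≤ ∏ i, (1 - shnirelmannZ (A i)) := by
  induction h with
  | zero => simpa using shnirelmannZ_nonneg (famSumZ A)
  | succ m ih =>
    rw [famSumZ_succ A h0]
    have h01 : 0 ≤ 1 - shnirelmannZ (A 0) := sub_nonneg.2 (shnirelmannZ_le_one (A 0))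
    calc 1 - shnirelmannZ {x | ∃ a ∈ A 0, ∃ b ∈ famSumZ (fun i : Fin m => A i.succ), x = a + b}
        ≤ (1 - shnirelmannZ (A 0)) * (1 - shnirelmannZ (famSumZ (fun i : Fin m => A i.succ))) :=
          two_set_density _ _ (h0 0) (famSumZ_zero_mem _)
      _ ≤ (1 - shnirelmannZ (A 0)) * ∏ i : Fin m, (1 - shnirelmannZ (A i.succ)) :=
          mul_le_mul_of_nonneg_left (ih (fun i => A i.succ) (fun i => h0 i.succ)) h01
      _ = ∏ i, (1 - shnirelmannZ (A i)) := (Fin.prod_univ_succ fun i => 1 - shnirelmannZ (A i)).symm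

/-- If `A₁, …, A_h` are sets of integers each containing `0` with
`σ(Aᵢ) = αᵢ`, then `1 − σ(A₁ + ⋯ + A_h) ≤ Π (1 − αᵢ)`. -/
theorem shnirelmann_product_inequality (h : ℕ) (hh : 0 < h)
    (A : Fin h → Set ℤ) (h0 : ∀ i, (0 : ℤ) ∈ A i) (α : Fin h → ℝ)
    (hα : ∀ i, shnirelmannZ (A i) = α i) :
    1 - shnirelmannZ (famSumZ A) ≤ ∏ i, (1 - α i) := by
  simpa only [hα] using aux_main h A h0
end

section
/- Let A be a set of positive integers with σ(A) > 0. Then A is a basis: there exists a positive integer h such that every nonnegative integer is a sum of h elements of A ∪ {0}, i.e., hA = ℕ₀. -/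
/-- The counting function of a set of integers: `count A x` is the number of
elements `a ∈ A` with `1 ≤ a ≤ x`. -/
noncomputable def count (A : Set ℕ) (x : ℕ) : ℕ := (A ∩ Set.Icc 1 x).ncard

/-- The Shnirel'man density of a set of integers: `σ(A) = inf_{n ≥ 1} A(n)/n`. -/
noncomputable def shnirelmann (A : Set ℕ) : ℝ :=
  ⨅ n : ℕ+, (count A n : ℝ) / ((n : ℕ) : ℝ)

/-- The `h`-fold sumset `hA = A + ⋯ + A` (`h` summands): all nonnegative
integers of the form `a₁ + ⋯ + a_h` with `aᵢ ∈ A ∪ {0}` for all `i`. -/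
def hfold (A : Set ℕ) (h : ℕ) : Set ℕ :=
  {x | ∃ f : Fin h → ℕ, (∀ i, f i ∈ A ∪ {0}) ∧ x = ∑ i, f i}

section Aux

lemma count_eq (A : Set ℕ) (n : ℕ) [DecidablePred (· ∈ A)] :
    count A n = ((Finset.Icc 1 n).filter (· ∈ A)).card := by
  rw [count, ← Set.ncard_coe_finset]
  congr 1
  ext m
  simp only [Finset.coe_filter, Finset.mem_Icc, Set.mem_inter_iff, Set.mem_Icc, Set.mem_setOf_eq]
  tauto

lemma count_le (A : Set ℕ) (n : ℕ) : count A n ≤ n := by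
  classical
  rw [count_eq]
  calc ((Finset.Icc 1 n).filter (· ∈ A)).card ≤ (Finset.Icc 1 n).card :=
        Finset.card_filter_le _ _
    _ = n := by simp

lemma bdd (A : Set ℕ) : BddBelow (Set.range fun n : ℕ+ => (count A n : ℝ) / ((n : ℕ) : ℝ)) :=
  ⟨0, by rintro x ⟨n, rfl⟩; positivity⟩

lemma shnirelmann_nonneg (A : Set ℕ) : 0 ≤ shnirelmann A :=
  le_ciInf fun n => by positivity

lemma shnirelmann_le_one (A : Set ℕ) : shnirelmann A ≤ 1 := by
  have h := ciInf_le (bdd A) (1 : ℕ+)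
  refine h.trans ?_
  have h1 := count_le A 1
  simp only [PNat.one_coe, Nat.cast_one, div_one]
  exact_mod_cast h1

lemma shnirelmann_mul_le (A : Set ℕ) (n : ℕ) :
    shnirelmann A * n ≤ count A n := by
  rcases Nat.eq_zero_or_pos n with rfl | hn
  · simp
  have h := ciInf_le (bdd A) (⟨n, hn⟩ : ℕ+)
  simp only [PNat.mk_coe] at h
  rw [le_div_iff₀ (by exact_mod_cast hn)] at h
  exact h

lemma zero_mem_hfold (A : Set ℕ) (h : ℕ) : 0 ∈ hfold A h :=
  ⟨fun _ => 0, fun _ => Or.inr rfl, by simp⟩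

lemma mem_hfold_one (A : Set ℕ) {a : ℕ} (ha : a ∈ A) : a ∈ hfold A 1 :=
  ⟨fun _ => a, fun _ => Or.inl ha, by simp⟩

lemma hfold_add_mem (A : Set ℕ) {m k x y : ℕ} (hx : x ∈ hfold A m) (hy : y ∈ hfold A k) :
    x + y ∈ hfold A (m + k) := by
  obtain ⟨f, hf, rfl⟩ := hx
  obtain ⟨g, hg, rfl⟩ := hy
  refine ⟨Fin.append f g, ?_, ?_⟩
  · intro i
    refine Fin.addCases (fun j => ?_) (fun j => ?_) i
    · rw [Fin.append_left]; exact hf j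
    · rw [Fin.append_right]; exact hg j
  · rw [Fin.sum_univ_add]
    simp

lemma key_count_s11 (B A C : Set ℕ) (hBC : B ⊆ C)
    (hadd : ∀ b, (b ∈ B ∨ b = 0) → ∀ a ∈ A, b + a ∈ C)
    (β : ℝ) (hβ : ∀ m : ℕ, β * m ≤ count A m) (n : ℕ) :
    (count B n : ℝ) + β * ((n : ℝ) - count B n) ≤ count C n := by
  classical
  set prev : ℕ → ℕ := fun m => Nat.findGreatest (· ∈ B) m with hprevdef
  have prev_le : ∀ m, prev m ≤ m := fun m => Nat.findGreatest_le m
  have prev_mem : ∀ m, prev m ∈ B ∨ prev m = 0 := by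
    intro m
    rcases eq_or_ne (prev m) 0 with h | h
    · exact Or.inr h
    · exact Or.inl (Nat.findGreatest_of_ne_zero rfl h)
  have prev_max : ∀ m k, prev m < k → k ≤ m → k ∉ B := fun m k h1 h2 =>
    Nat.findGreatest_is_greatest h1 h2
  set S := Finset.Icc 1 n with hS
  set SB := S.filter (· ∈ B) with hSB
  set T := S.filter (fun m => m ∉ B) with hT
  set D := T.filter (fun m => (m - prev m) ∈ A) with hD
  have h1 : SB.card + D.card ≤ count C n := by
    rw [count_eq]
    have hdisj : Disjoint SB D := by
      rw [Finset.disjoint_left]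
      intro m hm hm'
      exact (Finset.mem_filter.1 ((Finset.mem_filter.1 hm').1)).2 (Finset.mem_filter.1 hm).2
    rw [← Finset.card_union_of_disjoint hdisj]
    apply Finset.card_le_card
    intro m hm
    rcases Finset.mem_union.1 hm with hm | hm
    · obtain ⟨hmS, hmB⟩ := Finset.mem_filter.1 hm
      exact Finset.mem_filter.2 ⟨hmS, hBC hmB⟩
    · obtain ⟨hmT, hmA⟩ := Finset.mem_filter.1 hm
      obtain ⟨hmS, hmB⟩ := Finset.mem_filter.1 hmT
      refine Finset.mem_filter.2 ⟨hmS, ?_⟩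
      have hin := hadd (prev m) (prev_mem m) _ hmA
      have heq : prev m + (m - prev m) = m := by have := prev_le m; omega
      rwa [heq] at hin
  have hDT : D ⊆ T := Finset.filter_subset _ _
  have hmaps : ∀ m ∈ T, prev m ∈ T.image prev := fun m hm => Finset.mem_image_of_mem _ hm
  have hTcard : T.card = ∑ a ∈ T.image prev, (T.filter (fun m => prev m = a)).card :=
    Finset.card_eq_sum_card_fiberwise hmaps
  have hDcard : D.card = ∑ a ∈ T.image prev, (D.filter (fun m => prev m = a)).card :=
    Finset.card_eq_sum_card_fiberwise (fun m hm => hmaps m (hDT hm))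
  have hfiber : ∀ a ∈ T.image prev,
      β * ((T.filter (fun m => prev m = a)).card : ℝ)
        ≤ ((D.filter (fun m => prev m = a)).card : ℝ) := by
    intro a ha
    set F := T.filter (fun m => prev m = a) with hF
    have hFmem : ∀ m, m ∈ F ↔ (1 ≤ m ∧ m ≤ n ∧ m ∉ B ∧ prev m = a) := by
      intro m
      rw [hF, Finset.mem_filter, hT, Finset.mem_filter, hS, Finset.mem_Icc]
      tauto
    have ha_lt : ∀ m ∈ F, a < m := by
      intro m hm
      obtain ⟨h1', h2', h3', h4'⟩ := (hFmem m).1 hm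
      have hle : a ≤ m := h4' ▸ prev_le m
      rcases lt_or_eq_of_le hle with h | h
      · exact h
      · exfalso
        rcases prev_mem m with hb | hb
        · rw [h4', h] at hb; exact h3' hb
        · rw [h4'] at hb; omega
    have hdc : ∀ m ∈ F, ∀ m', a < m' → m' ≤ m → m' ∈ F := by
      intro m hm m' hm'a hm'm
      obtain ⟨h1', h2', h3', h4'⟩ := (hFmem m).1 hm
      have hpm : prev m < m' := by rw [h4']; exact hm'a
      have hm'B : m' ∉ B := prev_max m m' hpm hm'm
      have hle : a ≤ prev m' := by
        rcases prev_mem m with hb | hb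
        · rw [h4'] at hb; exact Nat.le_findGreatest (le_of_lt hm'a) hb
        · rw [h4'] at hb; omega
      have hge : prev m' ≤ a := by
        by_contra hlt
        push_neg at hlt
        have h5 : prev m' ≤ m' := prev_le m'
        have hnB : prev m' ∉ B := prev_max m (prev m') (by rw [h4']; exact hlt) (le_trans h5 hm'm)
        rcases prev_mem m' with hb | hb
        · exact hnB hb
        · omega
      exact (hFmem m').2 ⟨by omega, le_trans hm'm h2', hm'B, le_antisymm hge hle⟩
    obtain ⟨m0, hm0T, hm0p⟩ := Finset.mem_image.1 ha
    have hFne : F.Nonempty := ⟨m0, (hFmem m0).2 (by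
      obtain ⟨hmS, hmB⟩ := Finset.mem_filter.1 hm0T
      obtain ⟨hl, hr⟩ := Finset.mem_Icc.1 hmS
      exact ⟨hl, hr, hmB, hm0p⟩)⟩
    set M := F.max' hFne with hM
    have hMF : M ∈ F := F.max'_mem hFne
    have hFI : F = Finset.Ioc a M := by
      ext m
      constructor
      · intro hm
        exact Finset.mem_Ioc.2 ⟨ha_lt m hm, F.le_max' m hm⟩
      · intro hm
        obtain ⟨hl, hr⟩ := Finset.mem_Ioc.1 hm
        exact hdc M hMF m hl hr
    have hcard : F.card = M - a := by rw [hFI, Nat.card_Ioc]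
    have hDfib : D.filter (fun m => prev m = a) = F.filter (fun m => (m - a) ∈ A) := by
      ext m
      constructor
      · intro hm
        obtain ⟨hmD, hp⟩ := Finset.mem_filter.1 hm
        obtain ⟨hmT, hmA⟩ := Finset.mem_filter.1 hmD
        exact Finset.mem_filter.2 ⟨Finset.mem_filter.2 ⟨hmT, hp⟩, by rwa [hp] at hmA⟩
      · intro hm
        obtain ⟨hmF, hmA⟩ := Finset.mem_filter.1 hm
        obtain ⟨hmT, hp⟩ := Finset.mem_filter.1 hmF
        exact Finset.mem_filter.2 ⟨Finset.mem_filter.2 ⟨hmT, by rwa [← hp] at hmA⟩, hp⟩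
    have hbij : (F.filter (fun m => (m - a) ∈ A)).card
        = ((Finset.Icc 1 (M - a)).filter (· ∈ A)).card := by
      apply Finset.card_bij' (fun m _ => m - a) (fun j _ => a + j)
      · intro m hm
        obtain ⟨hmF, hmA⟩ := Finset.mem_filter.1 hm
        rw [hFI] at hmF
        obtain ⟨hl, hr⟩ := Finset.mem_Ioc.1 hmF
        exact Finset.mem_filter.2 ⟨Finset.mem_Icc.2 ⟨by omega, by omega⟩, hmA⟩
      · intro j hj
        obtain ⟨hjI, hjA⟩ := Finset.mem_filter.1 hj
        obtain ⟨hl, hr⟩ := Finset.mem_Icc.1 hjI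
        refine Finset.mem_filter.2 ⟨?_, by simpa using hjA⟩
        rw [hFI]
        exact Finset.mem_Ioc.2 ⟨by omega, by omega⟩
      · intro m hm
        obtain ⟨hmF, _⟩ := Finset.mem_filter.1 hm
        rw [hFI] at hmF
        obtain ⟨hl, _⟩ := Finset.mem_Ioc.1 hmF
        omega
      · intro j hj
        omega
    rw [hDfib, hbij, hcard, ← count_eq]
    exact hβ (M - a)
  have h2 : β * (T.card : ℝ) ≤ (D.card : ℝ) := by
    rw [hTcard, hDcard]
    push_cast
    rw [Finset.mul_sum]
    exact Finset.sum_le_sum hfiber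
  have h3 : SB.card + T.card = n := by
    rw [hSB, hT]
    rw [Finset.card_filter_add_card_filter_not]
    simp [hS]
  have hC : ((SB.card + D.card : ℕ) : ℝ) ≤ (count C n : ℝ) := by exact_mod_cast h1
  have hSBc : (count B n : ℝ) = (SB.card : ℝ) := by rw [count_eq, hSB, hS]
  have h3' : (SB.card : ℝ) + (T.card : ℝ) = (n : ℝ) := by exact_mod_cast h3
  push_cast at hC
  rw [hSBc]
  have hTn : (n : ℝ) - SB.card = T.card := by linarith
  rw [hTn]
  linarith

lemma density_step (A B C : Set ℕ) (hBC : B ⊆ C)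
    (hadd : ∀ b, (b ∈ B ∨ b = 0) → ∀ a ∈ A, b + a ∈ C) :
    shnirelmann B + shnirelmann A - shnirelmann B * shnirelmann A ≤ shnirelmann C := by
  set α := shnirelmann A with hα
  set β := shnirelmann B with hβ
  have hα1 : α ≤ 1 := shnirelmann_le_one A
  refine le_ciInf fun n => ?_
  have hn : (0 : ℝ) < ((n : ℕ) : ℝ) := by exact_mod_cast n.pos
  rw [le_div_iff₀ hn]
  have hkey := key_count_s11 B A C hBC hadd α (fun m => shnirelmann_mul_le A m) (n : ℕ)
  have hBn : β * (n : ℕ) ≤ count B n := shnirelmann_mul_le B n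
  have hmul := mul_le_mul_of_nonneg_left hBn (sub_nonneg.2 hα1)
  nlinarith [hkey, hmul]

end Aux

/-- Shnirel'man's basis theorem: a set of positive integers with positive
Shnirel'man density is a basis, i.e., `hA = ℕ₀` for some positive integer `h`. -/
theorem shnirelmann_basis (A : Set ℕ) (hA : ∀ a ∈ A, 0 < a)
    (h : 0 < shnirelmann A) :
    ∃ h : ℕ, 0 < h ∧ hfold A h = Set.univ := by
  classical
  set α := shnirelmann A with hαdef
  have hα1 : α ≤ 1 := shnirelmann_le_one A
  have h1α : 0 ≤ 1 - α := by linarith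
  have hiter : ∀ k : ℕ, 1 - (1 - α) ^ k ≤ shnirelmann (hfold A k) := by
    intro k
    induction k with
    | zero => simpa using shnirelmann_nonneg (hfold A 0)
    | succ k ih =>
      have hsub : hfold A k ⊆ hfold A (k + 1) := by
        intro x hx
        have hx0 := hfold_add_mem A hx (zero_mem_hfold A 1)
        simpa using hx0
      have hadd : ∀ b, (b ∈ hfold A k ∨ b = 0) → ∀ a ∈ A, b + a ∈ hfold A (k + 1) := by
        intro b hb a ha
        rcases hb with hb | rfl
        · exact hfold_add_mem A hb (mem_hfold_one A ha)
        · exact hfold_add_mem A (zero_mem_hfold A k) (mem_hfold_one A ha)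
      have hstep := density_step A (hfold A k) (hfold A (k + 1)) hsub hadd
      have hpow : (1 - α) ^ (k + 1) = (1 - α) ^ k * (1 - α) := pow_succ _ _
      have hmul := mul_le_mul_of_nonneg_right
        (show 1 - shnirelmann (hfold A k) ≤ (1 - α) ^ k by linarith) h1α
      nlinarith [hstep, hmul, hpow]
  obtain ⟨k, hk⟩ := exists_pow_lt_of_lt_one (show (0:ℝ) < 1/2 by norm_num)
    (show 1 - α < 1 by linarith)
  set B := hfold A (k + 1) with hBdef
  have hpk : (1 - α) ^ (k + 1) < 1 / 2 := by
    have hle : (1 - α) ^ (k + 1) ≤ (1 - α) ^ k := by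
      rw [pow_succ]
      nlinarith [pow_nonneg h1α k]
    linarith
  have hB : (1 : ℝ) / 2 ≤ shnirelmann B := by
    have := hiter (k + 1)
    linarith
  refine ⟨2 * (k + 1), by omega, ?_⟩
  rw [Set.eq_univ_iff_forall]
  intro n
  rcases Nat.eq_zero_or_pos n with rfl | hn
  · exact zero_mem_hfold A _
  by_cases hnB : n ∈ B
  · have hmem := hfold_add_mem A hnB (zero_mem_hfold A (k + 1))
    rw [two_mul]
    simpa using hmem
  · have hcnt : (n : ℝ) ≤ 2 * count B n := by
      have hm := shnirelmann_mul_le B n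
      nlinarith [hB, show (0:ℝ) ≤ (n:ℝ) by positivity]
    have hcntn : n ≤ 2 * count B n := by exact_mod_cast hcnt
    have hstep : count B n = count B (n - 1) := by
      rw [count_eq, count_eq]
      congr 1
      ext m
      simp only [Finset.mem_filter, Finset.mem_Icc]
      constructor
      · rintro ⟨⟨hl, hr⟩, hmB⟩
        have hne : m ≠ n := fun e => hnB (e ▸ hmB)
        exact ⟨⟨hl, by omega⟩, hmB⟩
      · rintro ⟨⟨hl, hr⟩, hmB⟩
        exact ⟨⟨hl, by omega⟩, hmB⟩
    set X := (Finset.Icc 1 (n - 1)).filter (· ∈ B) with hX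
    set Y := X.image (fun b => n - b) with hY
    have hXcard : X.card = count B (n - 1) := (count_eq B (n - 1)).symm
    have hYcard : Y.card = X.card := Finset.card_image_of_injOn (by
      intro x hx y hy hxy
      obtain ⟨hxI, _⟩ := Finset.mem_filter.1 hx
      obtain ⟨hyI, _⟩ := Finset.mem_filter.1 hy
      obtain ⟨hl, hr⟩ := Finset.mem_Icc.1 hxI
      obtain ⟨hl', hr'⟩ := Finset.mem_Icc.1 hyI
      simp only at hxy
      omega)
    have hXsub : X ⊆ Finset.Icc 1 (n - 1) := Finset.filter_subset _ _
    have hYsub : Y ⊆ Finset.Icc 1 (n - 1) := by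
      intro m hm
      obtain ⟨b, hb, rfl⟩ := Finset.mem_image.1 hm
      obtain ⟨hbI, _⟩ := Finset.mem_filter.1 hb
      obtain ⟨hl, hr⟩ := Finset.mem_Icc.1 hbI
      exact Finset.mem_Icc.2 ⟨by omega, by omega⟩
    have hnd : ¬ Disjoint X Y := by
      intro hd
      have hcu := Finset.card_union_of_disjoint hd
      have hle : (X ∪ Y).card ≤ (Finset.Icc 1 (n - 1)).card :=
        Finset.card_le_card (Finset.union_subset hXsub hYsub)
      rw [hcu, Nat.card_Icc] at hle
      omega
    obtain ⟨m, hmX, hmY⟩ := Finset.not_disjoint_iff.1 hnd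
    obtain ⟨b, hbX, hbe⟩ := Finset.mem_image.1 hmY
    have hmB : m ∈ B := (Finset.mem_filter.1 hmX).2
    have hbB : b ∈ B := (Finset.mem_filter.1 hbX).2
    have hbn : b ≤ n - 1 := (Finset.mem_Icc.1 (Finset.mem_filter.1 hbX).1).2
    have hne : n = b + m := by omega
    rw [two_mul, hne]
    exact hfold_add_mem A hbB hmB
end
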